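/- arXiv:2511.13982 — 2 statements merged into one kernel-verified Lean document; each statement's English description precedes it below -/
import Mathlib

section
/- Let P be a finite nonempty collection of cells in ℤ² and let B_1,…,B_p be its maximal rectangles (maximal subsets of P that form combinatorial rectangles of cells). Then there exists an index i such that B_i is not contained in the union of the other maximal rectangles, i.e., B̄_i := B_i ∖ (⋃_{j≠i} B_j) is nonempty. -/
/-- A (combinatorial) rectangle of cells in ℤ². -/
def IsRect (R : Finset (ℤ × ℤ)) : Prop :=
  ∃ a b c d : ℤ, a ≤ b ∧ c ≤ d ∧
    ∀ x : ℤ × ℤ, x ∈ R ↔ (a ≤ x.1 ∧ x.1 ≤ b ∧ c ≤ x.2 ∧ x.2 ≤ d)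

/-- A maximal rectangle of the collection of cells `P`. -/
def IsMaxRect (P R : Finset (ℤ × ℤ)) : Prop :=
  IsRect R ∧ R ⊆ P ∧ ∀ R' : Finset (ℤ × ℤ), IsRect R' → R' ⊆ P → R ⊆ R' → R' = R

/-- There is a minimal `c ≤ t` such that `Q` holds on all of `[c, t]`. -/
lemma run_min (Q : ℤ → Prop) (t lb : ℤ) (hQ : Q t) (hlb : ∀ y, Q y → lb ≤ y) :
    ∃ c, c ≤ t ∧ (∀ y, c ≤ y → y ≤ t → Q y) ∧ ¬ Q (c - 1) := by
  classical
  set F : Finset ℤ := (Finset.Icc lb t).filter (fun c => ∀ y, c ≤ y → y ≤ t → Q y) with hF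
  have htF : t ∈ F := by
    simp only [hF, Finset.mem_filter, Finset.mem_Icc]
    refine ⟨⟨hlb t hQ, le_refl t⟩, ?_⟩
    intro y h1 h2
    have : y = t := le_antisymm h2 h1
    rwa [this]
  have hne : F.Nonempty := ⟨t, htF⟩
  set c := F.min' hne with hc
  have hcF : c ∈ F := F.min'_mem hne
  simp only [hF, Finset.mem_filter, Finset.mem_Icc] at hcF
  refine ⟨c, hcF.1.2, hcF.2, ?_⟩
  intro hQc
  have h1 : c - 1 ∈ F := by
    simp only [hF, Finset.mem_filter, Finset.mem_Icc]
    refine ⟨⟨hlb _ hQc, by omega⟩, ?_⟩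
    intro y h1 h2
    rcases eq_or_lt_of_le h1 with h | h
    · rwa [← h]
    · exact hcF.2 y (by omega) h2
  have := F.min'_le _ h1
  omega

/-- There is a maximal `r ≥ t` such that `Q` holds on all of `[t, r]`. -/
lemma run_max (Q : ℤ → Prop) (t ub : ℤ) (hQ : Q t) (hub : ∀ y, Q y → y ≤ ub) :
    ∃ r, t ≤ r ∧ (∀ y, t ≤ y → y ≤ r → Q y) ∧ ¬ Q (r + 1) := by
  obtain ⟨c, h1, h2, h3⟩ := run_min (fun y => Q (2 * t - y)) t (2 * t - ub)
    (by show Q (2 * t - t)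
        have h : 2 * t - t = t := by ring
        rw [h]; exact hQ) (fun y hy => by have := hub _ hy; omega)
  refine ⟨2 * t - c, by omega, fun y hy1 hy2 => ?_, ?_⟩
  · have := h2 (2 * t - y) (by omega) (by omega)
    simpa using this
  · have heq : 2 * t - c + 1 = 2 * t - (c - 1) := by ring
    intro hcon
    exact h3 (by rw [← heq]; exact hcon)

theorem exists_maxRect_with_private_cell (P : Finset (ℤ × ℤ)) (hP : P.Nonempty) :
    ∃ B : Finset (ℤ × ℤ), IsMaxRect P B ∧
      ∃ C ∈ B, ∀ B' : Finset (ℤ × ℤ), IsMaxRect P B' → B' ≠ B → C ∉ B' := by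
  classical
  have hPy : (P.image Prod.snd).Nonempty := hP.image _
  have hPx : (P.image Prod.fst).Nonempty := hP.image _
  set y0 := (P.image Prod.snd).max' hPy with hy0def
  have hy : ∀ p ∈ P, p.2 ≤ y0 := fun p hp =>
    Finset.le_max' _ _ (Finset.mem_image_of_mem _ hp)
  have hylb : ∀ p ∈ P, (P.image Prod.snd).min' hPy ≤ p.2 := fun p hp =>
    Finset.min'_le _ _ (Finset.mem_image_of_mem _ hp)
  have hxub : ∀ p ∈ P, p.1 ≤ (P.image Prod.fst).max' hPx := fun p hp =>
    Finset.le_max' _ _ (Finset.mem_image_of_mem _ hp)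
  have hxlb : ∀ p ∈ P, (P.image Prod.fst).min' hPx ≤ p.1 := fun p hp =>
    Finset.min'_le _ _ (Finset.mem_image_of_mem _ hp)
  obtain ⟨p1, hp1P, hp1⟩ := Finset.mem_image.mp ((P.image Prod.snd).max'_mem hPy)
  have hx1 : (p1.1, y0) ∈ P := by
    rw [hy0def, ← hp1]
    simpa using hp1P
  set x1 := p1.1 with hx1def
  -- left end of the run
  obtain ⟨l, hl1, hl2, hl3⟩ := run_min (fun x => (x, y0) ∈ P) x1 _ hx1
    (fun x hx => hxlb _ hx)
  -- right end of the run
  obtain ⟨r, hr1, hr2, hr3⟩ := run_max (fun x => (x, y0) ∈ P) x1 _ hx1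
    (fun x hx => hxub _ hx)
  have hlr : l ≤ r := le_trans hl1 hr1
  have hrun : ∀ x, l ≤ x → x ≤ r → (x, y0) ∈ P := by
    intro x h1 h2
    rcases le_total x x1 with h | h
    · exact hl2 x h1 h
    · exact hr2 x h h2
  -- minimal bottom row c such that the whole rectangle [l,r] × [c,y0] is in P
  obtain ⟨c, hc1, hc2, hc3⟩ := run_min (fun y => ∀ x, l ≤ x → x ≤ r → (x, y) ∈ P) y0 _
    hrun (fun y hy' => hylb _ (hy' l le_rfl hlr))
  push_neg at hc3
  obtain ⟨x₀, hx₀1, hx₀2, hx₀3⟩ := hc3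
  set B : Finset (ℤ × ℤ) := Finset.Icc l r ×ˢ Finset.Icc c y0 with hBdef
  have hmemB : ∀ q : ℤ × ℤ, q ∈ B ↔ (l ≤ q.1 ∧ q.1 ≤ r ∧ c ≤ q.2 ∧ q.2 ≤ y0) := by
    intro q
    simp [hBdef, Finset.mem_product, Finset.mem_Icc, and_assoc]
  have hBrect : IsRect B := ⟨l, r, c, y0, hlr, hc1, hmemB⟩
  have hBsub : B ⊆ P := by
    intro q hq
    rw [hmemB] at hq
    have := hc2 q.2 hq.2.2.1 hq.2.2.2 q.1 hq.1 hq.2.1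
    simpa using this
  have hBmax : IsMaxRect P B := by
    refine ⟨hBrect, hBsub, ?_⟩
    rintro R' ⟨a, b, cc, d, hab, hcd, hR'⟩ hR'P hBR'
    have h1 : (a ≤ l ∧ l ≤ b ∧ cc ≤ c ∧ c ≤ d) :=
      (hR' (l, c)).mp (hBR' ((hmemB (l, c)).mpr ⟨le_rfl, hlr, le_rfl, hc1⟩))
    have h2 : (a ≤ r ∧ r ≤ b ∧ cc ≤ y0 ∧ y0 ≤ d) :=
      (hR' (r, y0)).mp (hBR' ((hmemB (r, y0)).mpr ⟨hlr, le_rfl, hc1, le_rfl⟩))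
    have hd : d ≤ y0 := hy _ (hR'P ((hR' (a, d)).mpr ⟨le_rfl, hab, le_trans h1.2.2.1 h1.2.2.2, le_rfl⟩))
    have ha : a = l := by
      by_contra h
      exact hl3 (hR'P ((hR' (l - 1, y0)).mpr ⟨by omega, by omega, by omega, by omega⟩))
    have hb : b = r := by
      by_contra h
      exact hr3 (hR'P ((hR' (r + 1, y0)).mpr ⟨by omega, by omega, by omega, by omega⟩))
    have hcc : cc = c := by
      by_contra h
      exact hx₀3 (hR'P ((hR' (x₀, c - 1)).mpr ⟨by omega, by omega, by omega, by omega⟩))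
    ext q
    rw [hR', hmemB]
    omega
  refine ⟨B, hBmax, (x₀, y0), (hmemB (x₀, y0)).mpr ⟨hx₀1, hx₀2, hc1, le_rfl⟩, ?_⟩
  rintro B' ⟨⟨a, b, cc, d, hab, hcd, hB'⟩, hB'P, hB'max⟩ hne hmem
  have hm : a ≤ x₀ ∧ x₀ ≤ b ∧ cc ≤ y0 ∧ y0 ≤ d := (hB' (x₀, y0)).mp hmem
  have hd : d ≤ y0 := hy _ (hB'P ((hB' (a, d)).mpr ⟨le_rfl, hab, hcd, le_rfl⟩))
  have ha : l ≤ a := by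
    by_contra h
    exact hl3 (hB'P ((hB' (l - 1, y0)).mpr ⟨by omega, by omega, by omega, by omega⟩))
  have hb : b ≤ r := by
    by_contra h
    exact hr3 (hB'P ((hB' (r + 1, y0)).mpr ⟨by omega, by omega, by omega, by omega⟩))
  have hcge : c ≤ cc := by
    by_contra h
    exact hx₀3 (hB'P ((hB' (x₀, c - 1)).mpr ⟨by omega, by omega, by omega, by omega⟩))
  have hsub : B' ⊆ B := by
    intro q hq
    have := (hB' q).mp hq
    rw [hmemB]
    omega
  exact hne ((hB'max B hBrect hBsub hsub).symm)
end

section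
/- Let S be a rook placement on a collection of cells P, and suppose two rooks of S occupy the diagonal corner cells of a rectangle R entirely contained in P. Then replacing these two rooks by rooks at the anti-diagonal corner cells of R yields again a valid non-attacking rook placement of the same size. -/
/-- Two cells of a collection `P` attack each other if they are distinct and lie in the same
row (resp. column), with every intermediate cell of that row (resp. column) belonging to `P`. -/
def Attacks (P : Finset (ℤ × ℤ)) (a b : ℤ × ℤ) : Prop :=
  a ≠ b ∧
    ((a.2 = b.2 ∧ ∀ x : ℤ, min a.1 b.1 ≤ x → x ≤ max a.1 b.1 → (x, a.2) ∈ P) ∨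
     (a.1 = b.1 ∧ ∀ y : ℤ, min a.2 b.2 ≤ y → y ≤ max a.2 b.2 → (a.1, y) ∈ P))

/-- A non-attacking rook placement on the collection of cells `P`. -/
def IsRookPlacement (P S : Finset (ℤ × ℤ)) : Prop :=
  S ⊆ P ∧ ∀ a ∈ S, ∀ b ∈ S, ¬ Attacks P a b

/-- One switch: replace two rooks at diagonal (resp. anti-diagonal) corner cells of a
rectangle entirely contained in `P` by rooks at its anti-diagonal (resp. diagonal) corners. -/
def SwitchStep (P : Finset (ℤ × ℤ)) (S T : Finset (ℤ × ℤ)) : Prop :=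
  ∃ a b c d : ℤ, a < b ∧ c < d ∧
    (∀ x y : ℤ, a ≤ x → x ≤ b → c ≤ y → y ≤ d → (x, y) ∈ P) ∧
    (((a, c) ∈ S ∧ (b, d) ∈ S ∧
        T = insert (a, d) (insert (b, c) ((S.erase (a, c)).erase (b, d)))) ∨
     ((a, d) ∈ S ∧ (b, c) ∈ S ∧
        T = insert (a, c) (insert (b, d) ((S.erase (a, d)).erase (b, c)))))

/-- Switching equivalence on `k`-rook placements of `P`. -/
def switchSetoid (P : Finset (ℤ × ℤ)) (k : ℕ) :
    Setoid {S : Finset (ℤ × ℤ) // IsRookPlacement P S ∧ S.card = k} where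
  r S T := Relation.EqvGen (SwitchStep P) S.1 T.1
  iseqv := ⟨fun S => Relation.EqvGen.refl S.1,
    fun h => Relation.EqvGen.symm _ _ h,
    fun h h' => Relation.EqvGen.trans _ _ _ h h'⟩

lemma attacks_symm {P : Finset (ℤ × ℤ)} {u v : ℤ × ℤ} (h : Attacks P u v) : Attacks P v u := by
  obtain ⟨hne, h | h⟩ := h
  · exact ⟨hne.symm, Or.inl ⟨h.1.symm, fun x hx1 hx2 => by
      rw [← h.1]; exact h.2 x (by omega) (by omega)⟩⟩
  · exact ⟨hne.symm, Or.inr ⟨h.1.symm, fun y hy1 hy2 => by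
      rw [← h.1]; exact h.2 y (by omega) (by omega)⟩⟩

lemma key_ad (P : Finset (ℤ × ℤ)) {a b c d : ℤ} (hab : a < b) (hcd : c < d)
    (hrect : ∀ x y : ℤ, a ≤ x → x ≤ b → c ≤ y → y ≤ d → (x, y) ∈ P)
    {s : ℤ × ℤ} (hsb : s ≠ (b, d)) (hsa : s ≠ (a, c))
    (h : Attacks P (a, d) s) : Attacks P (b, d) s ∨ Attacks P (a, c) s := by
  obtain ⟨hne, h | h⟩ := h
  · left
    have h1 : d = s.2 := h.1
    have h2 : ∀ x : ℤ, min a s.1 ≤ x → x ≤ max a s.1 → (x, d) ∈ P := h.2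
    refine ⟨fun he => hsb he.symm, Or.inl ⟨h1, fun x hx1 hx2 => ?_⟩⟩
    have hx1' : min b s.1 ≤ x := hx1
    have hx2' : x ≤ max b s.1 := hx2
    show (x, d) ∈ P
    by_cases hc : min a s.1 ≤ x ∧ x ≤ max a s.1
    · exact h2 x hc.1 hc.2
    · exact hrect x d (by omega) (by omega) hcd.le le_rfl
  · right
    have h1 : a = s.1 := h.1
    have h2 : ∀ y : ℤ, min d s.2 ≤ y → y ≤ max d s.2 → (a, y) ∈ P := h.2
    refine ⟨fun he => hsa he.symm, Or.inr ⟨h1, fun y hy1 hy2 => ?_⟩⟩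
    have hy1' : min c s.2 ≤ y := hy1
    have hy2' : y ≤ max c s.2 := hy2
    show (a, y) ∈ P
    by_cases hcse : min d s.2 ≤ y ∧ y ≤ max d s.2
    · exact h2 y hcse.1 hcse.2
    · exact hrect a y le_rfl hab.le (by omega) (by omega)

lemma key_bc (P : Finset (ℤ × ℤ)) {a b c d : ℤ} (hab : a < b) (hcd : c < d)
    (hrect : ∀ x y : ℤ, a ≤ x → x ≤ b → c ≤ y → y ≤ d → (x, y) ∈ P)
    {s : ℤ × ℤ} (hsb : s ≠ (b, d)) (hsa : s ≠ (a, c))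
    (h : Attacks P (b, c) s) : Attacks P (b, d) s ∨ Attacks P (a, c) s := by
  obtain ⟨hne, h | h⟩ := h
  · right
    have h1 : c = s.2 := h.1
    have h2 : ∀ x : ℤ, min b s.1 ≤ x → x ≤ max b s.1 → (x, c) ∈ P := h.2
    refine ⟨fun he => hsa he.symm, Or.inl ⟨h1, fun x hx1 hx2 => ?_⟩⟩
    have hx1' : min a s.1 ≤ x := hx1
    have hx2' : x ≤ max a s.1 := hx2
    show (x, c) ∈ P
    by_cases hc : min b s.1 ≤ x ∧ x ≤ max b s.1
    · exact h2 x hc.1 hc.2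
    · exact hrect x c (by omega) (by omega) le_rfl hcd.le
  · left
    have h1 : b = s.1 := h.1
    have h2 : ∀ y : ℤ, min c s.2 ≤ y → y ≤ max c s.2 → (b, y) ∈ P := h.2
    refine ⟨fun he => hsb he.symm, Or.inr ⟨h1, fun y hy1 hy2 => ?_⟩⟩
    have hy1' : min d s.2 ≤ y := hy1
    have hy2' : y ≤ max d s.2 := hy2
    show (b, y) ∈ P
    by_cases hcse : min c s.2 ≤ y ∧ y ≤ max c s.2
    · exact h2 y hcse.1 hcse.2
    · exact hrect b y hab.le le_rfl (by omega) (by omega)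

theorem switch_yields_placement (P S : Finset (ℤ × ℤ)) (hS : IsRookPlacement P S)
    (a b c d : ℤ) (hab : a < b) (hcd : c < d)
    (hrect : ∀ x y : ℤ, a ≤ x → x ≤ b → c ≤ y → y ≤ d → (x, y) ∈ P)
    (h1 : (a, c) ∈ S) (h2 : (b, d) ∈ S) :
    IsRookPlacement P (insert (a, d) (insert (b, c) ((S.erase (a, c)).erase (b, d)))) ∧
    (insert (a, d) (insert (b, c) ((S.erase (a, c)).erase (b, d)))).card = S.card := by
  obtain ⟨hsub, hatt⟩ := hS
  -- (a,d) ∉ S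
  have had : (a, d) ∉ S := by
    intro h
    exact hatt (a, c) h1 (a, d) h
      ⟨by simp only [ne_eq, Prod.mk.injEq]; omega,
       Or.inr ⟨rfl, fun y hy1 hy2 => hrect a y le_rfl hab.le (by omega) (by omega)⟩⟩
  have hbc : (b, c) ∉ S := by
    intro h
    exact hatt (b, c) h (b, d) h2
      ⟨by simp only [ne_eq, Prod.mk.injEq]; omega,
       Or.inr ⟨rfl, fun y hy1 hy2 => hrect b y hab.le le_rfl (by omega) (by omega)⟩⟩
  have hne_ac_bd : ((a, c) : ℤ × ℤ) ≠ (b, d) := by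
    simp only [ne_eq, Prod.mk.injEq]; omega
  have hne_ad_bc : ((a, d) : ℤ × ℤ) ≠ (b, c) := by
    simp only [ne_eq, Prod.mk.injEq]; omega
  have hmem : ∀ u : ℤ × ℤ,
      u ∈ insert (a, d) (insert (b, c) ((S.erase (a, c)).erase (b, d))) ↔
      u = (a, d) ∨ u = (b, c) ∨ (u ≠ (b, d) ∧ u ≠ (a, c) ∧ u ∈ S) := by
    intro u
    rw [Finset.mem_insert, Finset.mem_insert]
    constructor
    · rintro (rfl | rfl | h)
      · exact Or.inl rfl
      · exact Or.inr (Or.inl rfl)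
      · rw [Finset.mem_erase, Finset.mem_erase] at h
        exact Or.inr (Or.inr ⟨h.1, h.2.1, h.2.2⟩)
    · rintro (rfl | rfl | ⟨hb, ha, hu⟩)
      · exact Or.inl rfl
      · exact Or.inr (Or.inl rfl)
      · exact Or.inr (Or.inr (Finset.mem_erase.2 ⟨hb, Finset.mem_erase.2 ⟨ha, hu⟩⟩))
  constructor
  · constructor
    · intro u hu
      rw [hmem] at hu
      rcases hu with rfl | rfl | ⟨_, _, hu⟩
      · exact hrect a d le_rfl hab.le hcd.le le_rfl
      · exact hrect b c hab.le le_rfl le_rfl hcd.le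
      · exact hsub hu
    · intro u hu v hv h
      rw [hmem] at hu hv
      -- dispose of equal case
      have hne := h.1
      rcases hu with rfl | rfl | ⟨hub, hua, huS⟩ <;>
        rcases hv with rfl | rfl | ⟨hvb, hva, hvS⟩
      · exact hne rfl
      · obtain ⟨_, h | h⟩ := h
        · have : d = c := h.1; omega
        · have : a = b := h.1; omega
      · rcases key_ad P hab hcd hrect hvb hva h with h' | h'
        · exact hatt (b, d) h2 v hvS h'
        · exact hatt (a, c) h1 v hvS h'
      · obtain ⟨_, h | h⟩ := h
        · have : c = d := h.1; omega
        · have : b = a := h.1; omega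
      · exact hne rfl
      · rcases key_bc P hab hcd hrect hvb hva h with h' | h'
        · exact hatt (b, d) h2 v hvS h'
        · exact hatt (a, c) h1 v hvS h'
      · rcases key_ad P hab hcd hrect hub hua (attacks_symm h) with h' | h'
        · exact hatt (b, d) h2 u huS (h')
        · exact hatt (a, c) h1 u huS (h')
      · rcases key_bc P hab hcd hrect hub hua (attacks_symm h) with h' | h'
        · exact hatt (b, d) h2 u huS h'
        · exact hatt (a, c) h1 u huS h'
      · exact hatt u huS v hvS h
  · have hbd' : (b, d) ∈ S.erase (a, c) := Finset.mem_erase.2 ⟨hne_ac_bd.symm, h2⟩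
    have hpos : 0 < (S.erase (a, c)).card := Finset.card_pos.2 ⟨_, hbd'⟩
    have hpos2 : 0 < S.card := Finset.card_pos.2 ⟨_, h1⟩
    have hbc' : (b, c) ∉ (S.erase (a, c)).erase (b, d) := fun h =>
      hbc (Finset.mem_of_mem_erase (Finset.mem_of_mem_erase h))
    have had' : (a, d) ∉ insert (b, c) ((S.erase (a, c)).erase (b, d)) := by
      intro h
      rcases Finset.mem_insert.1 h with h | h
      · exact hne_ad_bc h
      · exact had (Finset.mem_of_mem_erase (Finset.mem_of_mem_erase h))
    rw [Finset.card_insert_of_notMem had', Finset.card_insert_of_notMem hbc',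
      Finset.card_erase_of_mem hbd']
    have := Finset.card_erase_of_mem h1
    omega
end
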